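/- Let b = λ + iη with λ, η ∈ ℝ and λ > 0. The complementary Romanovski–Routh polynomials 𝒫ₙ(b;x), defined by the recurrence 𝒫₀(b;x) = 1, 𝒫₁(b;x) = x − c₁, and 𝒫ₙ₊₁(b;x) = (x − cₙ₊₁)𝒫ₙ(b;x) − dₙ₊₁(x² + 1)𝒫ₙ₋₁(b;x) for n ≥ 1, where cₙ = η/(λ+n−1) and dₙ₊₁ = n(2λ+n−1)/(4(λ+n−1)(λ+n)), satisfy for all n ≥ 1 and all x the closed-form hypergeometric expression 𝒫ₙ(b;x) = ((x−i)ⁿ/2ⁿ) · ((2λ)ₙ/(λ)ₙ) · Σ_{k=0}^{n} [(−n)ₖ(b)ₖ/((2λ)ₖ k!)] (−2i/(x−i))ᵏ. -/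

import Mathlib

/-!
After scaling by `2ⁿ (λ)ₙ`, both sides satisfy
`Rₙ₊₂ = 2((λ + n + 1) x - η) Rₙ₊₁ - (n + 1)(2λ + n)(x² + 1) Rₙ` with the same `R₀, R₁`.
For the right-hand side `(x - i)ⁿ (2λ)ₙ ₂F₁(-n, b; 2λ; z)`, `z = -2i/(x - i)`, this is Gauss's
contiguous relation in the first parameter, because `x² + 1 = (x - i)² (1 - z)` and
`2((λ + n + 1) x - η) = (x - i)(2λ + 2n + 2 - (b + n + 1) z)`.
-/

open Complex Finset

/-- Pochhammer symbol `(a)ₖ` over ℂ. -/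
noncomputable def poch (a : ℂ) (k : ℕ) : ℂ := Polynomial.eval a (ascPochhammer ℂ k)

/-- Complementary Romanovski–Routh polynomials `𝒫ₙ(b;x)` with `b = λ + iη`,
defined by the three-term recurrence, evaluated at complex `x`. -/
noncomputable def crr (lam eta : ℝ) : ℕ → ℂ → ℂ
  | 0, _ => 1
  | 1, x => x - ((eta / lam : ℝ) : ℂ)
  | n + 2, x =>
      (x - ((eta / (lam + n + 1) : ℝ) : ℂ)) * crr lam eta (n + 1) x -
        (((n + 1) * (2 * lam + n) / (4 * (lam + n) * (lam + n + 1)) : ℝ) : ℂ) *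
          (x ^ 2 + 1) * crr lam eta n x

open Polynomial
open scoped Nat

lemma poch_zero (a : ℂ) : poch a 0 = 1 := by simp [poch]

lemma poch_succ (a : ℂ) (k : ℕ) : poch a (k + 1) = poch a k * (a + k) :=
  ascPochhammer_succ_eval k a

lemma poch_succ_left (a : ℂ) (k : ℕ) : poch a (k + 1) = a * poch (a + 1) k := by
  simp [poch, ascPochhammer_succ_left, eval_comp]

lemma poch_one (a : ℂ) : poch a 1 = a := by simp [poch]

lemma poch_neg_natCast_of_lt {m k : ℕ} (h : m < k) : poch (-(m : ℂ)) k = 0 :=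
  ascPochhammer_eval_neg_coe_nat_of_lt h

lemma add_natCast_ne_zero_of_re_pos {a : ℂ} (ha : 0 < a.re) (j : ℕ) : a + j ≠ 0 := by
  intro h
  have := congrArg re h
  simp only [add_re, natCast_re, zero_re] at this
  linarith [j.cast_nonneg (α := ℝ)]

lemma poch_ne_zero {a : ℂ} (ha : ∀ j : ℕ, a + j ≠ 0) (k : ℕ) : poch a k ≠ 0 := by
  induction k with
  | zero => simp [poch_zero]
  | succ k ih => rw [poch_succ]; exact mul_ne_zero ih (ha k)

/-- The coefficient of `z ^ k` in Gauss's series `₂F₁(a, b; c; z)`. -/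
noncomputable def gaussCoeff (a b c : ℂ) (k : ℕ) : ℂ :=
  poch a k * poch b k / (poch c k * k !)

lemma gaussCoeff_zero (a b c : ℂ) : gaussCoeff a b c 0 = 1 := by
  simp [gaussCoeff, poch_zero]

lemma gaussCoeff_succ_mul (a b c : ℂ) {k : ℕ} (hc : c + k ≠ 0) :
    gaussCoeff a b c (k + 1) * ((c + k) * (k + 1)) = gaussCoeff a b c k * ((a + k) * (b + k)) := by
  simp only [gaussCoeff, poch_succ, Nat.factorial_succ, Nat.cast_mul, Nat.cast_add, Nat.cast_one]
  field_simp

lemma add_mul_gaussCoeff (a b c : ℂ) (k : ℕ) :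
    (a + k) * gaussCoeff a b c k = a * gaussCoeff (a + 1) b c k := by
  have h : poch a k * (a + k) = a * poch (a + 1) k :=
    (poch_succ a k).symm.trans (poch_succ_left a k)
  simp only [gaussCoeff]
  linear_combination poch b k / (poch c k * k !) * h

/-- Gauss's contiguous relation
`(c - a) F(a - 1) + (2a - c + (b - a) z) F(a) + a (z - 1) F(a + 1) = 0`
for `F(a) = ₂F₁(a, b; c; z)`, read off at `z ^ (k + 1)`. -/
lemma gaussCoeff_contiguous (a b c : ℂ) {k : ℕ} (hc : c + k ≠ 0) :
    (c - a) * gaussCoeff (a - 1) b c (k + 1) + (2 * a - c) * gaussCoeff a b c (k + 1)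
      + (b - a) * gaussCoeff a b c k + a * gaussCoeff (a + 1) b c k
      - a * gaussCoeff (a + 1) b c (k + 1) = 0 := by
  have hD : (c + k) * ((k : ℂ) + 1) ≠ 0 := mul_ne_zero hc (Nat.cast_add_one_ne_zero k)
  have hshift := add_mul_gaussCoeff (a - 1) b c k
  rw [sub_add_cancel] at hshift
  refine (mul_eq_zero.1 ?_).resolve_left hD
  linear_combination (c - a) * gaussCoeff_succ_mul (a - 1) b c hc
    + (2 * a - c) * gaussCoeff_succ_mul a b c hc - a * gaussCoeff_succ_mul (a + 1) b c hc
    + (c - a) * (b + k) * hshift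
    - ((c + k) * (k + 1) - (a + 1 + k) * (b + k)) * add_mul_gaussCoeff a b c k

noncomputable def gaussPoly (m : ℕ) (b c : ℂ) : ℂ[X] :=
  ∑ k ∈ range (m + 1), C (gaussCoeff (-m) b c k) * X ^ k

lemma coeff_gaussPoly (m : ℕ) (b c : ℂ) (k : ℕ) :
    (gaussPoly m b c).coeff k = gaussCoeff (-m) b c k := by
  simp only [gaussPoly, finsetSum_coeff, coeff_C_mul_X_pow, sum_ite_eq, mem_range]
  split_ifs with hk
  · rfl
  · simp [gaussCoeff, poch_neg_natCast_of_lt (show m < k by omega)]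

lemma gaussPoly_one (b c : ℂ) : gaussPoly 1 b c = 1 - C (b / c) * X := by
  simp [gaussPoly, gaussCoeff, sum_range_succ, poch_one, poch_zero, neg_div, sub_eq_add_neg]

lemma gaussPoly_contiguous (b : ℂ) {c : ℂ} (hc : ∀ j : ℕ, c + j ≠ 0) (n : ℕ) :
    C (c + n + 1) * gaussPoly (n + 2) b c
      = (C (c + 2 * n + 2) - C (b + n + 1) * X) * gaussPoly (n + 1) b c
        - C ((n : ℂ) + 1) * (1 - X) * gaussPoly n b c := by
  ext (_ | k)
  · simp only [coeff_C_mul, coeff_sub, sub_mul, one_mul, mul_assoc, coeff_X_mul_zero,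
      coeff_gaussPoly, gaussCoeff_zero]
    ring
  · simp only [coeff_C_mul, coeff_sub, sub_mul, one_mul, mul_assoc, coeff_X_mul, coeff_gaussPoly]
    have h := gaussCoeff_contiguous (-((n : ℂ) + 1)) b c (hc k)
    rw [show -((n : ℂ) + 1) - 1 = -((n + 2 : ℕ) : ℂ) by push_cast; ring,
      show -((n : ℂ) + 1) + 1 = -(n : ℂ) by ring,
      show -((n : ℂ) + 1) = -((n + 1 : ℕ) : ℂ) by push_cast; ring] at h
    push_cast at h ⊢
    linear_combination h

lemma two_pow_mul_poch_mul_crr_add_two (lam eta : ℝ) (hlam : 0 < lam) (n : ℕ) (x : ℂ) :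
    2 ^ (n + 2) * poch lam (n + 2) * crr lam eta (n + 2) x
      = 2 * ((lam + n + 1) * x - eta) * (2 ^ (n + 1) * poch lam (n + 1) * crr lam eta (n + 1) x)
        - (n + 1) * (2 * lam + n) * (x ^ 2 + 1) * (2 ^ n * poch lam n * crr lam eta n x) := by
  have h0 : (lam : ℂ) + n ≠ 0 := add_natCast_ne_zero_of_re_pos (by simpa using hlam) n
  have h1 : (lam : ℂ) + n + 1 ≠ 0 := by
    simpa [add_assoc] using add_natCast_ne_zero_of_re_pos (a := lam) (by simpa using hlam) (n + 1)
  rw [crr, poch_succ, poch_succ]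
  push_cast
  field_simp
  ring

noncomputable def hypergeometricForm (lam eta : ℝ) (m : ℕ) (x : ℂ) : ℂ :=
  (x - I) ^ m * poch (2 * lam) m * (gaussPoly m (lam + eta * I) (2 * lam)).eval (-2 * I / (x - I))

lemma hypergeometricForm_add_two (lam eta : ℝ) (hlam : 0 < lam) (n : ℕ) {x : ℂ} (hx : x ≠ I) :
    hypergeometricForm lam eta (n + 2) x
      = 2 * ((lam + n + 1) * x - eta) * hypergeometricForm lam eta (n + 1) x
        - (n + 1) * (2 * lam + n) * (x ^ 2 + 1) * hypergeometricForm lam eta n x := by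
  have hc : ∀ j : ℕ, 2 * (lam : ℂ) + j ≠ 0 := add_natCast_ne_zero_of_re_pos (by simpa using hlam)
  have hzw : -2 * I / (x - I) * (x - I) = -2 * I := div_mul_cancel₀ _ (sub_ne_zero.mpr hx)
  have h := congrArg (eval (-2 * I / (x - I))) (gaussPoly_contiguous (lam + eta * I) hc n)
  simp only [eval_mul, eval_sub, eval_C, eval_X, eval_one] at h
  unfold hypergeometricForm
  set z := -2 * I / (x - I)
  set S₀ := (gaussPoly n (lam + eta * I) (2 * lam)).eval z
  set S₁ := (gaussPoly (n + 1) (lam + eta * I) (2 * lam)).eval z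
  set P := poch (2 * lam) n
  rw [poch_succ, poch_succ]
  push_cast
  linear_combination (x - I) ^ (n + 2) * P * (2 * lam + n) * h
    + (x - I) ^ (n + 1) * P * (2 * lam + n) * ((n + 1) * S₀ - (lam + eta * I + n + 1) * S₁) * hzw
    + (x - I) ^ n * P * (2 * lam + n) * (2 * eta * (x - I) * S₁ + (n + 1) * S₀) * I_mul_I

lemma two_pow_mul_poch_mul_crr (lam eta : ℝ) (hlam : 0 < lam) {x : ℂ} (hx : x ≠ I) (m : ℕ) :
    2 ^ m * poch lam m * crr lam eta m x = hypergeometricForm lam eta m x := by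
  induction m using Nat.twoStepInduction with
  | zero => simp [crr, hypergeometricForm, gaussPoly, poch_zero, gaussCoeff_zero]
  | one =>
    have hlam' : (lam : ℂ) ≠ 0 := ofReal_ne_zero.mpr hlam.ne'
    simp only [hypergeometricForm, gaussPoly_one, crr, poch_one, eval_sub, eval_one, eval_mul,
      eval_C, eval_X, pow_one, ofReal_div]
    field_simp
    linear_combination -(eta : ℂ) * I_mul_I
  | more n ih₀ ih₁ =>
    rw [two_pow_mul_poch_mul_crr_add_two lam eta hlam, hypergeometricForm_add_two lam eta hlam n hx,
      ih₀, ih₁]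

theorem stmt0_general (lam eta : ℝ) (hlam : 0 < lam) (n : ℕ)
    (x : ℂ) (hx : x ≠ I) :
    crr lam eta n x =
      ((x - I) ^ n / 2 ^ n) * (poch (2 * lam) n / poch (lam : ℂ) n) *
        ∑ k ∈ Finset.range (n + 1),
          poch (-(n : ℂ)) k * poch ((lam : ℂ) + (eta : ℂ) * I) k /
              (poch (2 * lam) k * (Nat.factorial k : ℂ)) *
            (-2 * I / (x - I)) ^ k := by
  have hpoch : poch lam n ≠ 0 :=
    poch_ne_zero (add_natCast_ne_zero_of_re_pos (by simpa using hlam)) n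
  have h := two_pow_mul_poch_mul_crr lam eta hlam hx n
  simp only [hypergeometricForm, gaussPoly, eval_finsetSum, eval_mul, eval_C, eval_pow, eval_X] at h
  rw [div_mul_div_comm, div_mul_eq_mul_div,
    eq_div_iff (mul_ne_zero (pow_ne_zero n two_ne_zero) hpoch), mul_comm]
  exact h

theorem stmt0 (lam eta : ℝ) (hlam : 0 < lam) (n : ℕ) (hn : 1 ≤ n)
    (x : ℂ) (hx : x ≠ I) :
    crr lam eta n x =
      ((x - I) ^ n / 2 ^ n) * (poch (2 * lam) n / poch (lam : ℂ) n) *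
        ∑ k ∈ Finset.range (n + 1),
          poch (-(n : ℂ)) k * poch ((lam : ℂ) + (eta : ℂ) * I) k /
              (poch (2 * lam) k * (Nat.factorial k : ℂ)) *
            (-2 * I / (x - I)) ^ k :=
  stmt0_general lam eta hlam n x hx
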